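/- Let P and P̄ be irreducible Markov chains with stationary distributions π, π̄ and multiplicative reversibilizations P† = P*P, P̄† = P̄*P̄, where P* = diag(π)^{-1}Pᵀdiag(π). Then ρ(√(P∘P̄))² ≤ ρ(√(P†∘P̄†)); in particular Distance(P†,P̄†) ≤ 2·Distance(P,P̄). -/

import Mathlib

open Matrix BigOperators Finset

noncomputable def rho {n : Type*} [Fintype n] [DecidableEq n] (A : Matrix n n ℝ) : ℝ :=
  (spectralRadius ℂ (A.map (algebraMap ℝ ℂ))).toReal

noncomputable def sqrtm {m n : Type*} (A : Matrix m n ℝ) : Matrix m n ℝ :=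
  Matrix.of fun i j => Real.sqrt (A i j)

noncomputable def mcDist {n : Type*} [Fintype n] [DecidableEq n] (P Q : Matrix n n ℝ) : ℝ :=
  1 - rho (sqrtm (Matrix.hadamard P Q))

def IsStochastic {d : ℕ} (P : Matrix (Fin d) (Fin d) ℝ) : Prop :=
  (∀ i j, 0 ≤ P i j) ∧ ∀ i, ∑ j, P i j = 1

def IsIrreducibleMC {d : ℕ} (P : Matrix (Fin d) (Fin d) ℝ) : Prop :=
  ∀ i j, ∃ k, 0 < (P ^ k) i j

def IsStationaryMC {d : ℕ} (P : Matrix (Fin d) (Fin d) ℝ) (π : Fin d → ℝ) : Prop :=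
  (∀ i, 0 < π i) ∧ (∑ i, π i = 1) ∧ ∀ j, ∑ i, π i * P i j = π j

def IsReversible {d : ℕ} (P : Matrix (Fin d) (Fin d) ℝ) (π : Fin d → ℝ) : Prop :=
  ∀ i j, π i * P i j = π j * P j i

def subm {d : ℕ} (P : Matrix (Fin d) (Fin d) ℝ) (R T : Finset (Fin d)) :
    Matrix {x // x ∈ R} {x // x ∈ T} ℝ :=
  Matrix.of fun i j => P i.1 j.1

noncomputable def censored {d : ℕ} (P : Matrix (Fin d) (Fin d) ℝ) (S : Finset (Fin d)) :
    Matrix {x // x ∈ S} {x // x ∈ S} ℝ :=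
  subm P S S + ∑' t : ℕ, subm P S Sᶜ * (subm P Sᶜ Sᶜ) ^ (t + 1) * subm P Sᶜ S

/-- The time reversal `P* = diag(π)⁻¹ Pᵀ diag(π)`. -/
noncomputable def timeReversal {d : ℕ} (P : Matrix (Fin d) (Fin d) ℝ) (π : Fin d → ℝ) :
    Matrix (Fin d) (Fin d) ℝ :=
  Matrix.of fun i j => π j * P j i / π i

/-- The multiplicative reversibilization `P† = P* P`. -/
noncomputable def multRev {d : ℕ} (P : Matrix (Fin d) (Fin d) ℝ) (π : Fin d → ℝ) :
    Matrix (Fin d) (Fin d) ℝ :=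
  timeReversal P π * P

/-! Write `M = √(P∘P̄)`. The entrywise Cauchy–Schwarz inequality gives
`√(P*∘P̄*) √(P∘P̄) ≤ √(P†∘P̄†)`, and `√(P*∘P̄*)` is the time reversal of `M` for the weights
`√(π∘π̄)`, i.e. the adjoint of `M` for a weighted inner product. Hence
`ρ(M)² ≤ ρ(M* M) ≤ ρ(√(P†∘P̄†))`, the first step being `ρ(B)² ≤ ‖B‖₂² = ρ(Bᵀ B)` after a
diagonal similarity and the second monotonicity of `ρ` on nonnegative matrices (Gelfand's
formula with the `ℓ∞` operator norm). Finally `ρ(M) ≤ 1`, so `1 - ρ(M)² ≤ 2 (1 - ρ(M))`. -/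

open scoped NNReal ENNReal

theorem spectrum.spectralRadius_mul_comm {𝕜 A : Type*} [NormedField 𝕜] [Ring A] [Algebra 𝕜 A]
    (a b : A) : spectralRadius 𝕜 (a * b) = spectralRadius 𝕜 (b * a) := by
  suffices h : ∀ a b : A, spectralRadius 𝕜 (a * b) ≤ spectralRadius 𝕜 (b * a) from
    (h a b).antisymm (h b a)
  intro a b
  refine iSup₂_le fun k hk => ?_
  rcases eq_or_ne k 0 with rfl | hk0
  · simp
  · have hk' : k ∈ spectrum 𝕜 (b * a) \ {0} :=
      spectrum.nonzero_mul_comm (𝕜 := 𝕜) a b ▸ ⟨hk, hk0⟩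
    exact le_iSup₂ (f := fun k (_ : k ∈ spectrum 𝕜 (b * a)) => (‖k‖₊ : ℝ≥0∞)) k hk'.1

section SpectralRadius

variable {n : Type*} [Fintype n] [DecidableEq n]

theorem Matrix.pow_apply_le_pow_apply {A B : Matrix n n ℝ} (hA : ∀ i j, 0 ≤ A i j)
    (hAB : ∀ i j, A i j ≤ B i j) (k : ℕ) (i j : n) : (A ^ k) i j ≤ (B ^ k) i j := by
  induction k generalizing j with
  | zero => rfl
  | succ k ih =>
    rw [pow_succ, pow_succ, mul_apply, mul_apply]
    exact Finset.sum_le_sum fun l _ => mul_le_mul (ih l) (hAB l j) (hA l j)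
      ((pow_apply_nonneg hA k i l).trans (ih l))

theorem rho_nonneg (A : Matrix n n ℝ) : 0 ≤ rho A := ENNReal.toReal_nonneg

theorem rho_mul_comm (A B : Matrix n n ℝ) : rho (A * B) = rho (B * A) := by
  simp only [rho, Matrix.map_mul, spectrum.spectralRadius_mul_comm]

section LinftyOpNorm

attribute [local instance] Matrix.linftyOpNormedRing Matrix.linftyOpNormedAlgebra

theorem spectralRadius_map_algebraMap_ne_top (A : Matrix n n ℝ) :
    spectralRadius ℂ (A.map (algebraMap ℝ ℂ)) ≠ ∞ := by
  refine ne_top_of_le_ne_top ?_ (spectrum.spectralRadius_le_pow_nnnorm_pow_one_div ℂ _ 0)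
  exact ENNReal.mul_ne_top (ENNReal.rpow_ne_top_of_nonneg (by positivity) ENNReal.coe_ne_top)
    (ENNReal.rpow_ne_top_of_nonneg (by positivity) ENNReal.coe_ne_top)

theorem Matrix.linfty_opNNNorm_map_algebraMap (A : Matrix n n ℝ) :
    ‖A.map (algebraMap ℝ ℂ)‖₊ = ‖A‖₊ := by
  simp only [linfty_opNNNorm_def, map_apply, Complex.coe_algebraMap, Complex.nnnorm_real]

theorem Matrix.linfty_opNNNorm_le_of_le {A B : Matrix n n ℝ} (hA : ∀ i j, 0 ≤ A i j)
    (hAB : ∀ i j, A i j ≤ B i j) : ‖A‖₊ ≤ ‖B‖₊ := by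
  rw [linfty_opNNNorm_def, linfty_opNNNorm_def]
  refine Finset.sup_mono_fun fun i _ => Finset.sum_le_sum fun j _ => ?_
  rw [← NNReal.coe_le_coe, coe_nnnorm, coe_nnnorm, Real.norm_of_nonneg (hA i j),
    Real.norm_of_nonneg ((hA i j).trans (hAB i j))]
  exact hAB i j

theorem rho_le_of_le {A B : Matrix n n ℝ} (hA : ∀ i j, 0 ≤ A i j)
    (hAB : ∀ i j, A i j ≤ B i j) : rho A ≤ rho B := by
  refine ENNReal.toReal_mono (spectralRadius_map_algebraMap_ne_top B) <|
    le_of_tendsto_of_tendsto'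
    (spectrum.pow_nnnorm_pow_one_div_tendsto_nhds_spectralRadius _)
    (spectrum.pow_nnnorm_pow_one_div_tendsto_nhds_spectralRadius _) fun k => ?_
  rw [← Matrix.map_pow, ← Matrix.map_pow, linfty_opNNNorm_map_algebraMap,
    linfty_opNNNorm_map_algebraMap]
  gcongr
  exact linfty_opNNNorm_le_of_le (pow_apply_nonneg hA k) (pow_apply_le_pow_apply hA hAB k)

theorem rho_le_of_forall_sum_le [Nonempty n] {A : Matrix n n ℝ} (hA : ∀ i j, 0 ≤ A i j)
    {r : ℝ} (hr : ∀ i, ∑ j, A i j ≤ r) : rho A ≤ r := by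
  have hr0 : 0 ≤ r := (Finset.sum_nonneg fun j _ => hA (Classical.arbitrary n) j).trans (hr _)
  have hnorm : ‖A‖₊ ≤ r.toNNReal := by
    rw [linfty_opNNNorm_def]
    refine Finset.sup_le fun i _ => ?_
    rw [← NNReal.coe_le_coe, Real.coe_toNNReal _ hr0, NNReal.coe_sum]
    simpa only [coe_nnnorm, Real.norm_of_nonneg (hA i _)] using hr i
  calc rho A ≤ ((‖A.map (algebraMap ℝ ℂ)‖₊ : ℝ≥0∞)).toReal :=
        ENNReal.toReal_mono ENNReal.coe_ne_top (spectrum.spectralRadius_le_nnnorm _)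
    _ ≤ r := by
      rw [ENNReal.coe_toReal, linfty_opNNNorm_map_algebraMap, ← Real.coe_toNNReal _ hr0]
      exact_mod_cast hnorm

end LinftyOpNorm

section L2OpNorm

open scoped Matrix.Norms.L2Operator

theorem rho_sq_le_rho_transpose_mul (B : Matrix n n ℝ) : rho B ^ 2 ≤ rho (Bᵀ * B) := by
  have hstar : (Bᵀ * B).map (algebraMap ℝ ℂ)
      = star (B.map (algebraMap ℝ ℂ)) * B.map (algebraMap ℝ ℂ) := by
    rw [Matrix.map_mul]
    congr 1
    ext i j
    simp [Matrix.star_apply]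
  rw [rho, rho, hstar, CStarAlgebra.toReal_spectralRadius_star_mul_self_eq_norm_sq]
  gcongr
  rcases isEmpty_or_nonempty n with hn | hn
  · simp [spectralRadius, spectrum.of_subsingleton]
  · calc (spectralRadius ℂ (B.map (algebraMap ℝ ℂ))).toReal
        ≤ ((‖B.map (algebraMap ℝ ℂ)‖₊ : ℝ≥0∞)).toReal :=
          ENNReal.toReal_mono ENNReal.coe_ne_top (spectrum.spectralRadius_le_nnnorm _)
      _ = ‖B.map (algebraMap ℝ ℂ)‖ := rfl

end L2OpNorm

theorem rho_sq_le_rho_diagonal_inv_mul_transpose_mul {s : n → ℝ} (hs : ∀ i, 0 < s i)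
    (M : Matrix n n ℝ) : rho M ^ 2 ≤ rho (diagonal s⁻¹ * Mᵀ * diagonal s * M) := by
  set E := diagonal fun i => √(s i)
  set E' := diagonal fun i => (√(s i))⁻¹
  have hsqrt : ∀ i, √(s i) ≠ 0 := fun i => (Real.sqrt_pos.2 (hs i)).ne'
  have hE'E : E' * E = 1 := by
    rw [diagonal_mul_diagonal, ← diagonal_one]
    exact congrArg diagonal (funext fun i => inv_mul_cancel₀ (hsqrt i))
  have hD : diagonal s = E * E := by
    rw [diagonal_mul_diagonal]
    exact congrArg diagonal (funext fun i => (Real.mul_self_sqrt (hs i).le).symm)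
  have hD' : diagonal s⁻¹ = E' * E' := by
    rw [diagonal_mul_diagonal]
    exact congrArg diagonal (funext fun i => by
      rw [Pi.inv_apply, ← mul_inv, Real.mul_self_sqrt (hs i).le])
  set B := E * M * E'
  have hM : rho M = rho B :=
    calc rho M = rho (E' * (E * M)) := by rw [← Matrix.mul_assoc, hE'E, Matrix.one_mul]
      _ = rho B := rho_mul_comm _ _
  have hMM : rho (diagonal s⁻¹ * Mᵀ * diagonal s * M) = rho (Bᵀ * B) :=
    calc rho (diagonal s⁻¹ * Mᵀ * diagonal s * M) = rho (E' * (E' * Mᵀ * E * E * M)) := by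
          simp only [hD, hD', Matrix.mul_assoc]
      _ = rho (E' * Mᵀ * E * E * M * E') := rho_mul_comm _ _
      _ = rho (Bᵀ * B) := by
          simp only [B, E, E', transpose_mul, diagonal_transpose, Matrix.mul_assoc]
  rw [hM, hMM]
  exact rho_sq_le_rho_transpose_mul B

end SpectralRadius

@[simp]
theorem sqrtm_apply {m n : Type*} (A : Matrix m n ℝ) (i : m) (j : n) :
    sqrtm A i j = √(A i j) := rfl

theorem sqrtm_apply_nonneg {m n : Type*} (A : Matrix m n ℝ) (i : m) (j : n) :
    0 ≤ sqrtm A i j := Real.sqrt_nonneg _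

theorem Matrix.mul_apply_nonneg {l m o : Type*} [Fintype m] {A : Matrix l m ℝ}
    {B : Matrix m o ℝ} (hA : ∀ i j, 0 ≤ A i j) (hB : ∀ i j, 0 ≤ B i j) (i : l) (j : o) :
    0 ≤ (A * B) i j :=
  Finset.sum_nonneg fun k _ => mul_nonneg (hA i k) (hB k j)

theorem sqrtm_hadamard_mul_apply_le {l m o : Type*} [Fintype m] {A C : Matrix l m ℝ}
    {B D : Matrix m o ℝ} (hA : ∀ i j, 0 ≤ A i j) (hB : ∀ i j, 0 ≤ B i j)
    (hC : ∀ i j, 0 ≤ C i j) (hD : ∀ i j, 0 ≤ D i j) (i : l) (j : o) :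
    (sqrtm (A ⊙ C) * sqrtm (B ⊙ D)) i j ≤ sqrtm ((A * B) ⊙ (C * D)) i j := by
  have hAB : ∀ k, 0 ≤ A i k * B k j := fun k => mul_nonneg (hA i k) (hB k j)
  have hCD : ∀ k, 0 ≤ C i k * D k j := fun k => mul_nonneg (hC i k) (hD k j)
  calc (sqrtm (A ⊙ C) * sqrtm (B ⊙ D)) i j
      = ∑ k, √(A i k * B k j) * √(C i k * D k j) := by
        simp only [mul_apply, sqrtm_apply, hadamard_apply]
        refine Finset.sum_congr rfl fun k _ => ?_
        rw [Real.sqrt_mul (hA i k), Real.sqrt_mul (hB k j), Real.sqrt_mul (hA i k),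
          Real.sqrt_mul (hC i k)]
        ring
    _ ≤ √(∑ k, A i k * B k j) * √(∑ k, C i k * D k j) := Real.sum_sqrt_mul_sqrt_le _ hAB hCD
    _ = sqrtm ((A * B) ⊙ (C * D)) i j := by
        rw [sqrtm_apply, hadamard_apply, mul_apply, mul_apply,
          Real.sqrt_mul (Finset.sum_nonneg fun k _ => hAB k)]

theorem IsStochastic.sum_sqrtm_hadamard_le_one {d : ℕ} {P Q : Matrix (Fin d) (Fin d) ℝ}
    (hP : IsStochastic P) (hQ : IsStochastic Q) (i : Fin d) :
    ∑ j, sqrtm (P ⊙ Q) i j ≤ 1 :=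
  calc ∑ j, sqrtm (P ⊙ Q) i j = ∑ j, √(P i j) * √(Q i j) :=
        Finset.sum_congr rfl fun j _ => Real.sqrt_mul (hP.1 i j) _
    _ ≤ √(∑ j, P i j) * √(∑ j, Q i j) := Real.sum_sqrt_mul_sqrt_le _ (hP.1 i) (hQ.1 i)
    _ = 1 := by rw [hP.2 i, hQ.2 i, Real.sqrt_one, one_mul]

theorem timeReversal_eq_diagonal_inv_mul_transpose_mul {d : ℕ} (P : Matrix (Fin d) (Fin d) ℝ)
    (π : Fin d → ℝ) : timeReversal P π = diagonal π⁻¹ * Pᵀ * diagonal π := by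
  ext i j
  simp only [timeReversal, of_apply, mul_diagonal, diagonal_mul, transpose_apply, Pi.inv_apply]
  ring

theorem timeReversal_apply_nonneg {d : ℕ} {P : Matrix (Fin d) (Fin d) ℝ} {π : Fin d → ℝ}
    (hP : ∀ i j, 0 ≤ P i j) (hπ : ∀ i, 0 ≤ π i) (i j : Fin d) : 0 ≤ timeReversal P π i j :=
  div_nonneg (mul_nonneg (hπ j) (hP j i)) (hπ i)

theorem sqrtm_hadamard_timeReversal {d : ℕ} (P Q : Matrix (Fin d) (Fin d) ℝ) {π ν : Fin d → ℝ}
    (hπ : ∀ i, 0 ≤ π i) (hν : ∀ i, 0 ≤ ν i) :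
    sqrtm (timeReversal P π ⊙ timeReversal Q ν)
      = timeReversal (sqrtm (P ⊙ Q)) fun i => √(π i * ν i) := by
  ext i j
  simp only [sqrtm_apply, hadamard_apply, timeReversal, of_apply]
  rw [div_mul_div_comm, mul_mul_mul_comm, Real.sqrt_div' _ (mul_nonneg (hπ i) (hν i)),
    Real.sqrt_mul (mul_nonneg (hπ j) (hν j))]

theorem distance_multRev_general {d : ℕ} (P Pbar : Matrix (Fin d) (Fin d) ℝ)
    (π πbar : Fin d → ℝ)
    (hP : IsStochastic P) (hPbar : IsStochastic Pbar)
    (hstat : IsStationaryMC P π) (hstatbar : IsStationaryMC Pbar πbar) :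
    rho (sqrtm (Matrix.hadamard P Pbar)) ^ 2
        ≤ rho (sqrtm (Matrix.hadamard (multRev P π) (multRev Pbar πbar)))
      ∧ mcDist (multRev P π) (multRev Pbar πbar) ≤ 2 * mcDist P Pbar := by
  obtain ⟨hπ, hπsum, -⟩ := hstat
  obtain ⟨hπbar, -, -⟩ := hstatbar
  have : Nonempty (Fin d) := by
    by_contra h
    simp [not_nonempty_iff.mp h] at hπsum
  set M := sqrtm (P ⊙ Pbar)
  have hsq : rho M ^ 2 ≤ rho (sqrtm (multRev P π ⊙ multRev Pbar πbar)) :=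
    calc rho M ^ 2 ≤ rho (sqrtm (timeReversal P π ⊙ timeReversal Pbar πbar) * M) := by
          rw [sqrtm_hadamard_timeReversal P Pbar (fun i => (hπ i).le) (fun i => (hπbar i).le),
            timeReversal_eq_diagonal_inv_mul_transpose_mul]
          exact rho_sq_le_rho_diagonal_inv_mul_transpose_mul
            (fun i => Real.sqrt_pos.2 (mul_pos (hπ i) (hπbar i))) M
      _ ≤ rho (sqrtm (multRev P π ⊙ multRev Pbar πbar)) :=
          rho_le_of_le (mul_apply_nonneg (sqrtm_apply_nonneg _) (sqrtm_apply_nonneg _))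
            (sqrtm_hadamard_mul_apply_le (timeReversal_apply_nonneg hP.1 fun i => (hπ i).le) hP.1
              (timeReversal_apply_nonneg hPbar.1 fun i => (hπbar i).le) hPbar.1)
  have hle : rho M ≤ 1 :=
    rho_le_of_forall_sum_le (sqrtm_apply_nonneg _) (hP.sum_sqrtm_hadamard_le_one hPbar)
  refine ⟨hsq, ?_⟩
  unfold mcDist
  nlinarith [rho_nonneg M]

/-- `ρ(√(P∘P̄))² ≤ ρ(√(P†∘P̄†))`, hence
`Distance(P†,P̄†) ≤ 2·Distance(P,P̄)`. -/
theorem distance_multRev {d : ℕ} (P Pbar : Matrix (Fin d) (Fin d) ℝ)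
    (π πbar : Fin d → ℝ)
    (hP : IsStochastic P) (hPbar : IsStochastic Pbar)
    (hirr : IsIrreducibleMC P) (hirrbar : IsIrreducibleMC Pbar)
    (hstat : IsStationaryMC P π) (hstatbar : IsStationaryMC Pbar πbar) :
    rho (sqrtm (Matrix.hadamard P Pbar)) ^ 2
        ≤ rho (sqrtm (Matrix.hadamard (multRev P π) (multRev Pbar πbar)))
      ∧ mcDist (multRev P π) (multRev Pbar πbar) ≤ 2 * mcDist P Pbar :=
  distance_multRev_general P Pbar π πbar hP hPbar hstat hstatbar
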